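/- Let R be a left commutative subrng of a left commutative rng U with U graded integral over R, let p be a Hu-Liu prime ideal of R, and let q be a maximal element of the set of ideals J of U with J ∩ R ⊆ p. Then q ∩ R = p. -/

import Mathlib

/-!
Write `x ∈ p` as `x·1ℓ + (x − x·1ℓ)`; both parts lie in `p`, so it suffices to show that even
elements and halo elements of `p` lie in `q`. For an even `x` the ideal `q + xU` still contracts
into `p`, so it equals `q` by maximality: if `r = s + xu ∈ R` with `s ∈ q`, then modulo `q` the
even part of `r` is `x·(u·1ℓ)` and its halo part is `(x·1♯) ♯ (u − u·1ℓ)`. Each part is thus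
`≡ wv (mod q)` with `w ∈ p` and `v` integral over `R`, inside one of the commutative rings
`(U·1ℓ, ·)` and `(ℏ⁺, ♯)`, where the classical argument applies: multiplying the integral
equation of `v` by `wⁿ` gives `rⁿ + ∑ cᵢ rⁿ⁻¹⁻ⁱ ∈ q` with all `cᵢ ∈ p`, so `rⁿ ∈ q ∩ R ⊆ p`
and `r ∈ p` by primality. A halo `x` is handled in the same way with the ideal `q + ℏ⁺ ♯ x`.
-/

universe u

/-- A left commutative rng: an associative rng with `x*y*z = y*x*z`, a fixed left
identity `e = 1ℓ`, whose additive halo `{x : x*e = 0}` is a commutative unital ring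
under a local product `sharp` with local identity `ls = 1♯`, satisfying the local
strong Hu-Liu triassociative law. -/
structure LeftCommRng (R : Type u) [NonUnitalRing R] where
  e : R
  sharp : R → R → R
  ls : R
  left_comm : ∀ x y z : R, x * y * z = y * x * z
  e_mul : ∀ x : R, e * x = x
  ls_halo : ls * e = 0
  sharp_halo : ∀ a b : R, a * e = 0 → b * e = 0 → sharp a b * e = 0
  sharp_assoc : ∀ a b c : R, a * e = 0 → b * e = 0 → c * e = 0 →
    sharp (sharp a b) c = sharp a (sharp b c)
  sharp_comm : ∀ a b : R, a * e = 0 → b * e = 0 → sharp a b = sharp b a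
  sharp_add : ∀ a b c : R, a * e = 0 → b * e = 0 → c * e = 0 →
    sharp a (b + c) = sharp a b + sharp a c
  sharp_ls : ∀ a : R, a * e = 0 → sharp ls a = a
  triassoc : ∀ (x a b : R), a * e = 0 → b * e = 0 →
    sharp (x * a) b = x * sharp a b

/-- The commutative product `x •_{1ℓ} y := xy + yx − (yx)·1ℓ`. -/
def LeftCommRng.bullet {R : Type u} [NonUnitalRing R] (L : LeftCommRng R) (x y : R) : R :=
  x * y + y * x - y * x * L.e

/-- A left commutative subrng `S` of the ambient left commutative rng. -/
structure IsLCSubrng {U : Type u} [NonUnitalRing U] (L : LeftCommRng U) (S : Set U) : Prop where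
  e_mem : L.e ∈ S
  ls_mem : L.ls ∈ S
  add_mem : ∀ {a b : U}, a ∈ S → b ∈ S → a + b ∈ S
  neg_mem : ∀ {a : U}, a ∈ S → -a ∈ S
  mul_mem : ∀ {a b : U}, a ∈ S → b ∈ S → a * b ∈ S
  sharp_mem : ∀ {a b : U}, a ∈ S → b ∈ S → a * L.e = 0 → b * L.e = 0 → L.sharp a b ∈ S

/-- An ideal `J` of the left commutative (sub)rng `S` (take `S = Set.univ` for an
ideal of the whole rng): an additive subgroup absorbing multiplication by `S` on
both sides, whose halo part is a `♯`-ideal. -/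
structure IsLCIdealIn {U : Type u} [NonUnitalRing U] (L : LeftCommRng U) (S J : Set U) : Prop where
  subset : J ⊆ S
  zero_mem : (0 : U) ∈ J
  add_mem : ∀ {a b : U}, a ∈ J → b ∈ J → a + b ∈ J
  neg_mem : ∀ {a : U}, a ∈ J → -a ∈ J
  mul_right : ∀ {a : U}, a ∈ J → ∀ r ∈ S, a * r ∈ J
  mul_left : ∀ {a : U}, a ∈ J → ∀ r ∈ S, r * a ∈ J
  sharp_mem : ∀ {a : U}, a ∈ J → a * L.e = 0 → ∀ b ∈ S, b * L.e = 0 → L.sharp a b ∈ J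

/-- A Hu-Liu prime ideal `p` of the left commutative (sub)rng `S`. -/
structure IsHLPrimeIn {U : Type u} [NonUnitalRing U] (L : LeftCommRng U) (S p : Set U)
    extends IsLCIdealIn L S p : Prop where
  ne_top : p ≠ S
  prime00 : ∀ x ∈ S, ∀ y ∈ S, x * L.e = x → y * L.e = y → x * y ∈ p → x ∈ p ∨ y ∈ p
  prime01 : ∀ x ∈ S, ∀ y ∈ S, x * L.e = x → y * L.e = 0 → x * y ∈ p → x ∈ p ∨ y ∈ p
  prime11 : ∀ x ∈ S, ∀ y ∈ S, x * L.e = 0 → y * L.e = 0 → L.sharp x y ∈ p → x ∈ p ∨ y ∈ p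

/-- `pw e x n` is `xⁿ` (with the convention `pw e x 0 = e`, the left identity). -/
def pw {R : Type u} [NonUnitalRing R] (e x : R) : ℕ → R
  | 0 => e
  | n + 1 => x * pw e x n

/-- `spow L u n` is the `n`-th `♯`-power `u^{♯n}` (with `spow L u 0 = 1♯`). -/
def LeftCommRng.spow {R : Type u} [NonUnitalRing R] (L : LeftCommRng R) (u : R) : ℕ → R
  | 0 => L.ls
  | n + 1 => L.sharp u (L.spow u n)

/-- `u` is integral over `R₀ = R·1ℓ` inside `(U₀, ·)`. -/
def Integral0 {U : Type u} [NonUnitalRing U] (L : LeftCommRng U) (R : Set U) (u : U) : Prop :=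
  ∃ n : ℕ, 1 ≤ n ∧ ∃ a : ℕ → U, (∀ i, a i ∈ R ∧ a i * L.e = a i) ∧
    pw L.e u n + ∑ i ∈ Finset.range n, a i * pw L.e u (n - 1 - i) = 0

/-- `u` is integral over `(R₁, ♯)` inside `(U₁, ♯)`. -/
def Integral1 {U : Type u} [NonUnitalRing U] (L : LeftCommRng U) (R : Set U) (u : U) : Prop :=
  ∃ n : ℕ, 1 ≤ n ∧ ∃ a : ℕ → U, (∀ i, a i ∈ R ∧ a i * L.e = 0) ∧
    L.spow u n + ∑ i ∈ Finset.range n, L.sharp (a i) (L.spow u (n - 1 - i)) = 0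

/-- `U` is graded integral over the subrng `R`. -/
def GradedIntegral {U : Type u} [NonUnitalRing U] (L : LeftCommRng U) (R : Set U) : Prop :=
  ∀ u : U, Integral0 L R (u * L.e) ∧ Integral1 L R (u - u * L.e)


open Finset

theorem mul_pow_add_sum_eq_pow_mul {A : Type*} [CommSemiring A] (n : ℕ) (w v : A) (a : ℕ → A) :
    (w * v) ^ n + ∑ i ∈ range n, w ^ (i + 1) * a i * (w * v) ^ (n - 1 - i) =
      w ^ n * (v ^ n + ∑ i ∈ range n, a i * v ^ (n - 1 - i)) := by
  rw [mul_add, mul_sum, mul_pow]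
  congr 1
  refine sum_congr rfl fun i hi => ?_
  have hn : n - 1 - i + (i + 1) = n := by have := mem_range.mp hi; omega
  calc w ^ (i + 1) * a i * (w * v) ^ (n - 1 - i)
      = a i * v ^ (n - 1 - i) * w ^ (n - 1 - i + (i + 1)) := by ring
    _ = w ^ n * (a i * v ^ (n - 1 - i)) := by rw [hn, mul_comm]

theorem mem_of_mul_sub_mem_of_integral_relation {A : Type*} [CommRing A] {S : Subring A}
    {P : Ideal S} (hP : ∀ {x y : S}, x * y ∈ P → x ∈ P ∨ y ∈ P) {Q : Ideal A}
    (hQP : Q.comap S.subtype ≤ P) {v : A} {n : ℕ} {a : ℕ → S}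
    (hv : v ^ n + ∑ i ∈ range n, (a i : A) * v ^ (n - 1 - i) = 0)
    {w r : S} (hw : w ∈ P) (hr : (w : A) * v - r ∈ Q) : r ∈ P := by
  set c : ℕ → S := fun i => w ^ (i + 1) * a i
  have hrel : r ^ n + ∑ i ∈ range n, c i * r ^ (n - 1 - i) ∈ Q.comap S.subtype := by
    rw [Ideal.mem_comap, ← Ideal.Quotient.eq_zero_iff_mem]
    have hwv : Ideal.Quotient.mk Q r = Ideal.Quotient.mk Q w * Ideal.Quotient.mk Q v := by
      rw [← map_mul]; exact (Ideal.Quotient.eq.mpr hr).symm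
    have hv' := congrArg (Ideal.Quotient.mk Q) hv
    simp only [map_add, map_sum, map_mul, map_pow, map_zero] at hv'
    simp only [c, map_add, map_sum, map_mul, map_pow, Subring.coe_subtype, hwv,
      mul_pow_add_sum_eq_pow_mul, hv', mul_zero]
  have hsum : ∑ i ∈ range n, c i * r ^ (n - 1 - i) ∈ P :=
    P.sum_mem fun i _ => P.mul_mem_right _ (P.mul_mem_right _ (P.pow_mem_of_mem hw _ i.succ_pos))
  have hrn : r ^ n ∈ P := (P.add_mem_iff_left hsum).mp (hQP hrel)
  rcases eq_or_ne P ⊤ with rfl | hP_ne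
  · trivial
  · exact (⟨hP_ne, hP⟩ : P.IsPrime).mem_of_pow_mem n hrn

namespace LeftCommRng

variable {U : Type u} [NonUnitalRing U] (L : LeftCommRng U)

theorem mul_e_mul_e (x : U) : x * L.e * L.e = x * L.e := by rw [mul_assoc, L.e_mul]

theorem sub_mul_e_mul_e (x : U) : (x - x * L.e) * L.e = 0 := by
  rw [sub_mul, mul_e_mul_e, sub_self]

theorem mul_eq_zero_of_mul_e_eq_zero {a : U} (ha : a * L.e = 0) (y : U) : a * y = 0 := by
  rw [← L.e_mul y, ← mul_assoc, ha, zero_mul]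

theorem sharp_add_left {a b c : U} (ha : a * L.e = 0) (hb : b * L.e = 0) (hc : c * L.e = 0) :
    L.sharp (a + b) c = L.sharp a c + L.sharp b c := by
  rw [L.sharp_comm _ _ (by rw [add_mul, ha, hb, add_zero]) hc, L.sharp_add _ _ _ hc ha hb,
    L.sharp_comm c a hc ha, L.sharp_comm c b hc hb]

theorem sharp_zero_right {a : U} (ha : a * L.e = 0) : L.sharp a 0 = 0 := by
  have h := L.sharp_add a 0 0 ha (zero_mul _) (zero_mul _)
  rwa [add_zero, left_eq_add] at h

theorem sharp_zero_left {a : U} (ha : a * L.e = 0) : L.sharp 0 a = 0 := by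
  rw [L.sharp_comm 0 a (zero_mul _) ha, L.sharp_zero_right ha]

@[ext]
structure EvenPart (L : LeftCommRng U) : Type u where
  val : U
  mul_e : val * L.e = val

@[ext]
structure Halo (L : LeftCommRng U) : Type u where
  val : U
  mul_e : val * L.e = 0

namespace EvenPart

instance : Add L.EvenPart := ⟨fun a b => ⟨a.val + b.val, by rw [add_mul, a.mul_e, b.mul_e]⟩⟩
instance : Zero L.EvenPart := ⟨⟨0, zero_mul _⟩⟩
instance : Neg L.EvenPart := ⟨fun a => ⟨-a.val, by rw [neg_mul, a.mul_e]⟩⟩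
instance : Mul L.EvenPart := ⟨fun a b => ⟨a.val * b.val, by rw [mul_assoc, b.mul_e]⟩⟩
instance : One L.EvenPart := ⟨⟨L.e, L.e_mul L.e⟩⟩

instance : CommRing L.EvenPart where
  add_assoc a b c := by ext; exact add_assoc _ _ _
  zero_add a := by ext; exact zero_add _
  add_zero a := by ext; exact add_zero _
  add_comm a b := by ext; exact add_comm _ _
  neg_add_cancel a := by ext; exact neg_add_cancel _
  nsmul := nsmulRec
  zsmul := zsmulRec
  left_distrib a b c := by ext; exact mul_add _ _ _
  right_distrib a b c := by ext; exact add_mul _ _ _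
  zero_mul a := by ext; exact zero_mul _
  mul_zero a := by ext; exact mul_zero _
  mul_assoc a b c := by ext; exact mul_assoc _ _ _
  one_mul a := by ext; exact L.e_mul _
  mul_one a := by ext; exact a.mul_e
  mul_comm a b := by
    ext
    calc a.val * b.val = a.val * b.val * L.e := by rw [mul_assoc, b.mul_e]
      _ = b.val * a.val * L.e := L.left_comm _ _ _
      _ = b.val * a.val := by rw [mul_assoc, a.mul_e]

variable {L}

@[simp] theorem val_zero : (0 : L.EvenPart).val = 0 := rfl
@[simp] theorem val_add (a b : L.EvenPart) : (a + b).val = a.val + b.val := rfl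
@[simp] theorem val_mul (a b : L.EvenPart) : (a * b).val = a.val * b.val := rfl
@[simp] theorem val_sub (a b : L.EvenPart) : (a - b).val = a.val - b.val :=
  (sub_eq_add_neg a.val b.val).symm

@[simp] theorem val_pow (a : L.EvenPart) (n : ℕ) : (a ^ n).val = pw L.e a.val n := by
  induction n with
  | zero => rfl
  | succ n ih => rw [pow_succ', val_mul, ih]; rfl

@[simp] theorem val_sum {ι : Type*} (s : Finset ι) (f : ι → L.EvenPart) :
    (∑ i ∈ s, f i).val = ∑ i ∈ s, (f i).val :=
  map_sum (⟨⟨EvenPart.val, rfl⟩, fun _ _ => rfl⟩ : L.EvenPart →+ U) f s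

end EvenPart

namespace Halo

instance : Add L.Halo := ⟨fun a b => ⟨a.val + b.val, by rw [add_mul, a.mul_e, b.mul_e, add_zero]⟩⟩
instance : Zero L.Halo := ⟨⟨0, zero_mul _⟩⟩
instance : Neg L.Halo := ⟨fun a => ⟨-a.val, by rw [neg_mul, a.mul_e, neg_zero]⟩⟩
instance : Mul L.Halo := ⟨fun a b => ⟨L.sharp a.val b.val, L.sharp_halo _ _ a.mul_e b.mul_e⟩⟩
instance : One L.Halo := ⟨⟨L.ls, L.ls_halo⟩⟩

instance : CommRing L.Halo where
  add_assoc a b c := by ext; exact add_assoc _ _ _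
  zero_add a := by ext; exact zero_add _
  add_zero a := by ext; exact add_zero _
  add_comm a b := by ext; exact add_comm _ _
  neg_add_cancel a := by ext; exact neg_add_cancel _
  nsmul := nsmulRec
  zsmul := zsmulRec
  left_distrib a b c := by ext; exact L.sharp_add _ _ _ a.mul_e b.mul_e c.mul_e
  right_distrib a b c := by ext; exact L.sharp_add_left a.mul_e b.mul_e c.mul_e
  zero_mul a := by ext; exact L.sharp_zero_left a.mul_e
  mul_zero a := by ext; exact L.sharp_zero_right a.mul_e
  mul_assoc a b c := by ext; exact L.sharp_assoc _ _ _ a.mul_e b.mul_e c.mul_e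
  one_mul a := by ext; exact L.sharp_ls _ a.mul_e
  mul_one a := by ext; exact (L.sharp_comm _ _ a.mul_e L.ls_halo).trans (L.sharp_ls _ a.mul_e)
  mul_comm a b := by ext; exact L.sharp_comm _ _ a.mul_e b.mul_e

variable {L}

@[simp] theorem val_zero : (0 : L.Halo).val = 0 := rfl
@[simp] theorem val_add (a b : L.Halo) : (a + b).val = a.val + b.val := rfl
@[simp] theorem val_mul (a b : L.Halo) : (a * b).val = L.sharp a.val b.val := rfl
@[simp] theorem val_sub (a b : L.Halo) : (a - b).val = a.val - b.val :=
  (sub_eq_add_neg a.val b.val).symm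

@[simp] theorem val_pow (a : L.Halo) (n : ℕ) : (a ^ n).val = L.spow a.val n := by
  induction n with
  | zero => rfl
  | succ n ih => rw [pow_succ', val_mul, ih]; rfl

@[simp] theorem val_sum {ι : Type*} (s : Finset ι) (f : ι → L.Halo) :
    (∑ i ∈ s, f i).val = ∑ i ∈ s, (f i).val :=
  map_sum (⟨⟨Halo.val, rfl⟩, fun _ _ => rfl⟩ : L.Halo →+ U) f s

end Halo

theorem sharp_neg_left {a b : U} (ha : a * L.e = 0) (hb : b * L.e = 0) :
    L.sharp (-a) b = -L.sharp a b :=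
  congrArg Halo.val (neg_mul (⟨a, ha⟩ : L.Halo) ⟨b, hb⟩)

end LeftCommRng

section Ideals

variable {U : Type u} [NonUnitalRing U] {L : LeftCommRng U} {S R J q : Set U}

theorem IsLCSubrng.zero_mem (hR : IsLCSubrng L R) : (0 : U) ∈ R := by
  simpa using hR.add_mem hR.e_mem (hR.neg_mem hR.e_mem)

theorem IsLCSubrng.sub_mem (hR : IsLCSubrng L R) {a b : U} (ha : a ∈ R) (hb : b ∈ R) :
    a - b ∈ R := by
  rw [sub_eq_add_neg]; exact hR.add_mem ha (hR.neg_mem hb)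

theorem IsLCIdealIn.sub_mem (hJ : IsLCIdealIn L S J) {a b : U} (ha : a ∈ J) (hb : b ∈ J) :
    a - b ∈ J := by
  rw [sub_eq_add_neg]; exact hJ.add_mem ha (hJ.neg_mem hb)

theorem IsLCIdealIn.mem_of_mul_e_mem_of_sub_mem (hJ : IsLCIdealIn L S J) {x : U}
    (h0 : x * L.e ∈ J) (h1 : x - x * L.e ∈ J) : x ∈ J := by
  simpa using hJ.add_mem h0 h1

def IsLCSubrng.evenSubring (hR : IsLCSubrng L R) : Subring L.EvenPart where
  carrier := {a | a.val ∈ R}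
  mul_mem' := hR.mul_mem
  one_mem' := hR.e_mem
  add_mem' := hR.add_mem
  zero_mem' := hR.zero_mem
  neg_mem' := hR.neg_mem

def IsLCSubrng.haloSubring (hR : IsLCSubrng L R) : Subring L.Halo where
  carrier := {a | a.val ∈ R}
  mul_mem' {a b} ha hb := hR.sharp_mem ha hb a.mul_e b.mul_e
  one_mem' := hR.ls_mem
  add_mem' := hR.add_mem
  zero_mem' := hR.zero_mem
  neg_mem' := hR.neg_mem

def IsLCIdealIn.evenIdeal (hJ : IsLCIdealIn L Set.univ J) : Ideal L.EvenPart where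
  carrier := {a | a.val ∈ J}
  add_mem' := hJ.add_mem
  zero_mem' := hJ.zero_mem
  smul_mem' c _ ha := hJ.mul_left ha c.val trivial

def IsLCIdealIn.haloIdeal (hJ : IsLCIdealIn L Set.univ J) : Ideal L.Halo where
  carrier := {a | a.val ∈ J}
  add_mem' := hJ.add_mem
  zero_mem' := hJ.zero_mem
  smul_mem' c a ha := by
    change L.sharp c.val a.val ∈ J
    rw [L.sharp_comm _ _ c.mul_e a.mul_e]
    exact hJ.sharp_mem ha a.mul_e c.val trivial c.mul_e

@[simp] theorem IsLCIdealIn.mem_evenIdeal (hJ : IsLCIdealIn L Set.univ J) (a : L.EvenPart) :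
    a ∈ hJ.evenIdeal ↔ a.val ∈ J := Iff.rfl

@[simp] theorem IsLCIdealIn.mem_haloIdeal (hJ : IsLCIdealIn L Set.univ J) (a : L.Halo) :
    a ∈ hJ.haloIdeal ↔ a.val ∈ J := Iff.rfl

def IsLCIdealIn.evenSubringIdeal (hR : IsLCSubrng L R) (hJ : IsLCIdealIn L R J) :
    Ideal hR.evenSubring where
  carrier := {a | a.val.val ∈ J}
  add_mem' := hJ.add_mem
  zero_mem' := hJ.zero_mem
  smul_mem' c _ ha := hJ.mul_left ha c.val.val c.prop

def IsLCIdealIn.haloSubringIdeal (hR : IsLCSubrng L R) (hJ : IsLCIdealIn L R J) :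
    Ideal hR.haloSubring where
  carrier := {a | a.val.val ∈ J}
  add_mem' := hJ.add_mem
  zero_mem' := hJ.zero_mem
  smul_mem' c a ha := by
    change L.sharp c.val.val a.val.val ∈ J
    rw [L.sharp_comm _ _ c.val.mul_e a.val.mul_e]
    exact hJ.sharp_mem ha a.val.mul_e c.val.val c.prop c.val.mul_e

theorem IsLCIdealIn.add_mul_right (hq : IsLCIdealIn L Set.univ q) (x : U) :
    IsLCIdealIn L Set.univ {t | ∃ s ∈ q, ∃ u, t = s + x * u} := by
  refine ⟨fun _ _ => trivial, ⟨0, hq.zero_mem, 0, by simp⟩, ?_, ?_, ?_, ?_, ?_⟩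
  · rintro _ _ ⟨s, hs, u, rfl⟩ ⟨s', hs', u', rfl⟩
    exact ⟨s + s', hq.add_mem hs hs', u + u', by rw [mul_add]; abel⟩
  · rintro _ ⟨s, hs, u, rfl⟩
    exact ⟨-s, hq.neg_mem hs, -u, by rw [mul_neg, neg_add]⟩
  · rintro _ ⟨s, hs, u, rfl⟩ r -
    exact ⟨s * r, hq.mul_right hs r trivial, u * r, by rw [add_mul, mul_assoc]⟩
  · rintro _ ⟨s, hs, u, rfl⟩ r -
    exact ⟨r * s, hq.mul_left hs r trivial, r * u,
      by rw [mul_add, ← mul_assoc, L.left_comm, mul_assoc]⟩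
  · rintro _ ⟨s, hs, u, rfl⟩ hsu b - hb
    have hs1 := L.sub_mul_e_mul_e s
    have hu1 := L.sub_mul_e_mul_e u
    have hhalo : s + x * u = (s - s * L.e) + x * (u - u * L.e) := by
      rw [add_mul, mul_assoc] at hsu
      calc s + x * u = s + x * u - (s * L.e + x * (u * L.e)) := by rw [hsu, sub_zero]
        _ = (s - s * L.e) + x * (u - u * L.e) := by rw [mul_sub]; abel
    refine ⟨L.sharp (s - s * L.e) b,
      hq.sharp_mem (hq.sub_mem hs (hq.mul_right hs _ trivial)) hs1 b trivial hb,
      L.sharp (u - u * L.e) b, ?_⟩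
    rw [hhalo, L.sharp_add_left hs1 (by rw [mul_assoc, hu1, mul_zero]) hb,
      L.triassoc x _ b hu1 hb]

theorem IsLCIdealIn.add_sharp_left (hq : IsLCIdealIn L Set.univ q) {x : U}
    (hx : x * L.e = 0) :
    IsLCIdealIn L Set.univ {t | ∃ s ∈ q, ∃ v, v * L.e = 0 ∧ t = s + L.sharp v x} := by
  refine ⟨fun _ _ => trivial, ⟨0, hq.zero_mem, 0, zero_mul _, by
    rw [L.sharp_zero_left hx, add_zero]⟩, ?_, ?_, ?_, ?_, ?_⟩
  · rintro _ _ ⟨s, hs, v, hv, rfl⟩ ⟨s', hs', v', hv', rfl⟩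
    refine ⟨s + s', hq.add_mem hs hs', v + v', by rw [add_mul, hv, hv', add_zero], ?_⟩
    rw [L.sharp_add_left hv hv' hx]; abel
  · rintro _ ⟨s, hs, v, hv, rfl⟩
    refine ⟨-s, hq.neg_mem hs, -v, by rw [neg_mul, hv, neg_zero], ?_⟩
    rw [L.sharp_neg_left hv hx, neg_add]
  · rintro _ ⟨s, hs, v, hv, rfl⟩ r -
    refine ⟨s * r, hq.mul_right hs r trivial, 0, zero_mul _, ?_⟩
    rw [add_mul, L.mul_eq_zero_of_mul_e_eq_zero (L.sharp_halo v x hv hx),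
      L.sharp_zero_left hx]
  · rintro _ ⟨s, hs, v, hv, rfl⟩ r -
    exact ⟨r * s, hq.mul_left hs r trivial, r * v, by rw [mul_assoc, hv, mul_zero],
      by rw [mul_add, L.triassoc r v x hv hx]⟩
  · rintro _ ⟨s, hs, v, hv, rfl⟩ hsv b - hb
    have hse : s * L.e = 0 := by rwa [add_mul, L.sharp_halo v x hv hx, add_zero] at hsv
    refine ⟨L.sharp s b, hq.sharp_mem hs hse b trivial hb, L.sharp v b,
      L.sharp_halo v b hv hb, ?_⟩
    rw [L.sharp_add_left hse (L.sharp_halo v x hv hx) hb, L.sharp_assoc v x b hv hx hb,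
      L.sharp_comm x b hx hb, ← L.sharp_assoc v b x hv hb hx]

end Ideals

section LyingOver

variable {U : Type u} [NonUnitalRing U] {L : LeftCommRng U} {R p q : Set U}

theorem IsHLPrimeIn.mem_of_mul_sub_mem_of_integral0 (hR : IsLCSubrng L R)
    (hp : IsHLPrimeIn L R p) (hq : IsLCIdealIn L Set.univ q) (hqp : q ∩ R ⊆ p)
    {x u r : U} (hxp : x ∈ p) (hx : x * L.e = x) (hu : u * L.e = u) (hint : Integral0 L R u)
    (hrR : r ∈ R) (hr : r * L.e = r) (hxur : x * u - r ∈ q) : r ∈ p := by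
  obtain ⟨n, -, a, ha, hrel⟩ := hint
  refine mem_of_mul_sub_mem_of_integral_relation (P := hp.evenSubringIdeal hR)
    (Q := hq.evenIdeal) (n := n) (v := ⟨u, hu⟩) (a := fun i => ⟨⟨a i, (ha i).2⟩, (ha i).1⟩)
    (w := ⟨⟨x, hx⟩, hp.subset hxp⟩) (r := ⟨⟨r, hr⟩, hrR⟩) ?_ (fun s hs => hqp ⟨hs, s.prop⟩)
    ?_ hxp (by simpa using hxur)
  · intro y z hyz
    exact hp.prime00 _ y.prop _ z.prop y.val.mul_e z.val.mul_e hyz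
  · ext
    simpa using hrel

theorem IsHLPrimeIn.mem_of_sharp_sub_mem_of_integral1 (hR : IsLCSubrng L R)
    (hp : IsHLPrimeIn L R p) (hq : IsLCIdealIn L Set.univ q) (hqp : q ∩ R ⊆ p)
    {x v r : U} (hxp : x ∈ p) (hx : x * L.e = 0) (hv : v * L.e = 0) (hint : Integral1 L R v)
    (hrR : r ∈ R) (hr : r * L.e = 0) (hxvr : L.sharp x v - r ∈ q) : r ∈ p := by
  obtain ⟨n, -, a, ha, hrel⟩ := hint
  refine mem_of_mul_sub_mem_of_integral_relation (P := hp.haloSubringIdeal hR)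
    (Q := hq.haloIdeal) (n := n) (v := ⟨v, hv⟩) (a := fun i => ⟨⟨a i, (ha i).2⟩, (ha i).1⟩)
    (w := ⟨⟨x, hx⟩, hp.subset hxp⟩) (r := ⟨⟨r, hr⟩, hrR⟩) ?_ (fun s hs => hqp ⟨hs, s.prop⟩)
    ?_ hxp (by simpa using hxvr)
  · intro y z hyz
    exact hp.prime11 _ y.prop _ z.prop y.val.mul_e z.val.mul_e hyz
  · ext
    simpa using hrel

theorem IsHLPrimeIn.even_mem_of_maximal (hR : IsLCSubrng L R) (hint : GradedIntegral L R)
    (hp : IsHLPrimeIn L R p) (hq : IsLCIdealIn L Set.univ q) (hqp : q ∩ R ⊆ p)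
    (hmax : ∀ J : Set U, IsLCIdealIn L Set.univ J → J ∩ R ⊆ p → q ⊆ J → J = q)
    {x : U} (hxp : x ∈ p) (hx : x * L.e = x) : x ∈ q := by
  have hJ : {t | ∃ s ∈ q, ∃ u, t = s + x * u} = q := by
    refine hmax _ (hq.add_mul_right x) ?_ fun s hs => ⟨s, hs, 0, by rw [mul_zero, add_zero]⟩
    rintro _ ⟨⟨s, hs, u, rfl⟩, hrR⟩
    refine hp.mem_of_mul_e_mem_of_sub_mem ?_ ?_
    · refine hp.mem_of_mul_sub_mem_of_integral0 hR hq hqp hxp hx (L.mul_e_mul_e u) (hint u).1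
        (hR.mul_mem hrR hR.e_mem) (L.mul_e_mul_e _) ?_
      convert hq.neg_mem (hq.mul_right hs L.e trivial) using 1
      rw [add_mul, mul_assoc]; abel
    · refine hp.mem_of_sharp_sub_mem_of_integral1 hR hq hqp (hp.mul_right hxp _ hR.ls_mem)
        (by rw [mul_assoc, L.ls_halo, mul_zero]) (L.sub_mul_e_mul_e u) (hint u).2
        (hR.sub_mem hrR (hR.mul_mem hrR hR.e_mem)) (L.sub_mul_e_mul_e _) ?_
      -- `(x·1♯) ♯ (u − u·1ℓ) = x·(u − u·1ℓ)` by the triassociative law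
      rw [L.triassoc _ _ _ L.ls_halo (L.sub_mul_e_mul_e u), L.sharp_ls _ (L.sub_mul_e_mul_e u)]
      convert hq.neg_mem (hq.sub_mem hs (hq.mul_right hs L.e trivial)) using 1
      rw [add_mul, mul_assoc, mul_sub]; abel
  exact hJ ▸ ⟨0, hq.zero_mem, L.e, by rw [hx, zero_add]⟩

theorem IsHLPrimeIn.halo_mem_of_maximal (hR : IsLCSubrng L R) (hint : GradedIntegral L R)
    (hp : IsHLPrimeIn L R p) (hq : IsLCIdealIn L Set.univ q) (hqp : q ∩ R ⊆ p)
    (hmax : ∀ J : Set U, IsLCIdealIn L Set.univ J → J ∩ R ⊆ p → q ⊆ J → J = q)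
    {x : U} (hxp : x ∈ p) (hx : x * L.e = 0) : x ∈ q := by
  have hJ : {t | ∃ s ∈ q, ∃ v, v * L.e = 0 ∧ t = s + L.sharp v x} = q := by
    refine hmax _ (hq.add_sharp_left hx) ?_ fun s hs =>
      ⟨s, hs, 0, zero_mul _, by rw [L.sharp_zero_left hx, add_zero]⟩
    rintro _ ⟨⟨s, hs, v, hv, rfl⟩, hrR⟩
    have hre : (s + L.sharp v x) * L.e = s * L.e := by
      rw [add_mul, L.sharp_halo _ _ hv hx, add_zero]
    refine hp.mem_of_mul_e_mem_of_sub_mem ?_ ?_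
    · exact hqp ⟨hre ▸ hq.mul_right hs L.e trivial, hR.mul_mem hrR hR.e_mem⟩
    · refine hp.mem_of_sharp_sub_mem_of_integral1 hR hq hqp hxp hx hv
        (by simpa only [hv, sub_zero] using (hint v).2)
        (hR.sub_mem hrR (hR.mul_mem hrR hR.e_mem)) (L.sub_mul_e_mul_e _) ?_
      rw [hre, L.sharp_comm x v hx hv]
      convert hq.neg_mem (hq.sub_mem hs (hq.mul_right hs L.e trivial)) using 1
      abel
  exact hJ ▸ ⟨0, hq.zero_mem, L.ls, L.ls_halo, by rw [L.sharp_ls x hx, zero_add]⟩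

end LyingOver

/-- a maximal element `q` of `{J ideal of U : J ∩ R ⊆ p}` satisfies
`q ∩ R = p` when `U` is graded integral over `R` and `p` is Hu-Liu prime in `R`. -/
theorem maximal_ideal_lies_over {U : Type u} [NonUnitalRing U] (L : LeftCommRng U)
    (R : Set U) (hR : IsLCSubrng L R) (hint : GradedIntegral L R)
    (p : Set U) (hp : IsHLPrimeIn L R p)
    (q : Set U) (hq : IsLCIdealIn L Set.univ q) (hqp : q ∩ R ⊆ p)
    (hmax : ∀ J : Set U, IsLCIdealIn L Set.univ J → J ∩ R ⊆ p → q ⊆ J → J = q) :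
    q ∩ R = p := by
  refine Set.Subset.antisymm hqp fun x hxp => ⟨?_, hp.subset hxp⟩
  have hx0 : x * L.e ∈ p := hp.mul_right hxp L.e hR.e_mem
  exact hq.mem_of_mul_e_mem_of_sub_mem
    (hp.even_mem_of_maximal hR hint hq hqp hmax hx0 (L.mul_e_mul_e x))
    (hp.halo_mem_of_maximal hR hint hq hqp hmax (hp.sub_mem hxp hx0) (L.sub_mul_e_mul_e x))
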